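/- Let k ≥ 2 be a natural number and let f ∈ ℂ⟦X⟧ have constant coefficient 0, coefficient of X equal to 1, and coefficient of X^j equal to 0 for every j with 2 ≤ j < k. Then for every natural number m, the m-fold composite f^{∘m} also has constant coefficient 0, coefficient of X equal to 1, coefficient of X^j equal to 0 for all 2 ≤ j < k, and its coefficient of X^k equals m times the coefficient of X^k of f. -/

import Mathlib

open PowerSeries

/-!
In the coefficient of `X^j` of `f ∘ g`, namely `∑_{n ≤ j} f_n · [X^j] gⁿ`, a series
`f = X + a X^k + O(X^{k+1})` contributes for `j ≤ k` only through `n = 1` and `n = k`, so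
`[X^j] (f ∘ g) = [X^j] g + f_j · [X^j] gʲ`. When `g = X + O(X²)` the diagonal coefficient
`[X^j] gʲ` is `1`, hence composing with `f` adds `a` to the coefficient of `X^k` of `g` and
leaves the lower ones unchanged; induction on `m` gives the claim.
-/

/-- Substitution of the power series `g` into the power series `f`, i.e. `f ∘ g = f(g(X))`.
For `g` with zero constant coefficient, the coefficient of `X^k` in `f(g(X))` is
`∑_{n ≤ k} (coeff n f) * (coeff k (g^n))`, since `coeff k (g^n) = 0` for `n > k`. -/
noncomputable def PowerSeries.compose (f g : PowerSeries ℂ) : PowerSeries ℂ :=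
  PowerSeries.mk fun k =>
    ∑ n ∈ Finset.range (k + 1), PowerSeries.coeff n f * PowerSeries.coeff k (g ^ n)

/-- The `m`-fold composite `f^{∘m}`: `f^{∘0} = X` and `f^{∘(m+1)} = f ∘ f^{∘m}`. -/
noncomputable def PowerSeries.iterComp (f : PowerSeries ℂ) : ℕ → PowerSeries ℂ
  | 0 => PowerSeries.X
  | m + 1 => PowerSeries.compose f (PowerSeries.iterComp f m)

namespace PowerSeries

theorem coeff_pow_self_of_constantCoeff_eq_zero {R : Type*} [CommSemiring R] {g : R⟦X⟧}
    (hg : constantCoeff g = 0) (n : ℕ) : coeff n (g ^ n) = coeff 1 g ^ n := by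
  obtain ⟨h, rfl⟩ := X_dvd_iff.mpr hg
  simp [mul_pow, coeff_X_pow_mul', coeff_succ_X_mul, coeff_zero_eq_constantCoeff]

theorem coeff_compose (f g : PowerSeries ℂ) (j : ℕ) :
    coeff j (compose f g) = ∑ n ∈ Finset.range (j + 1), coeff n f * coeff j (g ^ n) :=
  coeff_mk _ _

theorem coeff_zero_compose (f g : PowerSeries ℂ) : coeff 0 (compose f g) = coeff 0 f := by
  simp [coeff_compose]

theorem coeff_one_compose (f g : PowerSeries ℂ) :
    coeff 1 (compose f g) = coeff 1 f * coeff 1 g := by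
  simp [coeff_compose, Finset.sum_range_succ, coeff_one]

theorem coeff_compose_of_two_le_of_le {f : PowerSeries ℂ} {k : ℕ} (h0 : coeff 0 f = 0)
    (h1 : coeff 1 f = 1) (hmid : ∀ j, 2 ≤ j → j < k → coeff j f = 0) (g : PowerSeries ℂ)
    {j : ℕ} (h2j : 2 ≤ j) (hjk : j ≤ k) :
    coeff j (compose f g) = coeff j g + coeff j f * coeff j (g ^ j) := by
  rw [coeff_compose, Finset.sum_range_succ, Finset.sum_eq_single 1]
  · rw [h1, pow_one, one_mul]
  · intro n hn hn1
    obtain rfl | h2n := (by omega : n = 0 ∨ 2 ≤ n)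
    · rw [h0, zero_mul]
    · rw [hmid n h2n ((Finset.mem_range.mp hn).trans_le hjk), zero_mul]
  · intro h1j
    exact absurd (Finset.mem_range.mpr (by omega)) h1j

end PowerSeries

/-- If `f = X + a_k X^k + (higher order)` with `k ≥ 2`, then
`f^{∘m} = X + m·a_k X^k + (higher order)` for every `m`. -/
theorem iterComp_coeff (k : ℕ) (hk : 2 ≤ k) (f : PowerSeries ℂ)
    (h0 : PowerSeries.coeff 0 f = 0) (h1 : PowerSeries.coeff 1 f = 1)
    (hmid : ∀ j, 2 ≤ j → j < k → PowerSeries.coeff j f = 0) (m : ℕ) :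
    PowerSeries.coeff 0 (PowerSeries.iterComp f m) = 0 ∧
    PowerSeries.coeff 1 (PowerSeries.iterComp f m) = 1 ∧
    (∀ j, 2 ≤ j → j < k → PowerSeries.coeff j (PowerSeries.iterComp f m) = 0) ∧
    PowerSeries.coeff k (PowerSeries.iterComp f m) = (m : ℂ) * PowerSeries.coeff k f := by
  induction m with
  | zero =>
    refine ⟨?_, ?_, fun j h2j _ => ?_, ?_⟩ <;> simp [iterComp, coeff_X] <;> omega
  | succ m ih =>
    obtain ⟨ih0, ih1, ihmid, ihk⟩ := ih
    have hdiag : coeff k (iterComp f m ^ k) = 1 := by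
      rw [coeff_pow_self_of_constantCoeff_eq_zero (by rwa [← coeff_zero_eq_constantCoeff_apply]),
        ih1, one_pow]
    refine ⟨by rw [iterComp, coeff_zero_compose, h0],
      by rw [iterComp, coeff_one_compose, h1, ih1, one_mul], fun j h2j hjk => ?_, ?_⟩
    · rw [iterComp, coeff_compose_of_two_le_of_le h0 h1 hmid _ h2j hjk.le, ihmid j h2j hjk,
        hmid j h2j hjk, zero_mul, add_zero]
    · rw [iterComp, coeff_compose_of_two_le_of_le h0 h1 hmid _ hk le_rfl, ihk, hdiag]
      push_cast
      ring
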